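/- arXiv:math/0503483 — 3 statements merged into one kernel-verified Lean document; each statement's English description precedes it below -/
import Mathlib

section
/- Let (Ω, F, P) be a probability space, F a sub-σ-field of the ambient σ-field, and Z₁, Z₂, V real random variables such that Z₁ ≤ V ≤ Z₂ almost surely, E[V | F] = 0 almost surely, and Z₁, Z₂ are F-measurable. Then for all λ ∈ ℝ, E[exp(λV) | F] ≤ exp(λ²(Z₂ − Z₁)²/8) almost surely. -/
/-!
By convexity, `exp (λ V)` lies below the chord of `x ↦ exp (λ x)` over `[Z₁, Z₂]`, an affine
function `A + B V` whose coefficients are `F`-measurable. Conditioning kills `B V`, leaving `A`,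
the value of the chord at `0`; since `0 ∈ [Z₁, Z₂]` (a consequence of `E[V | F] = 0`), this is
the moment generating function of the mean-zero law on `{Z₁, Z₂}`, which Hoeffding's lemma bounds
by `exp (λ² (Z₂ - Z₁)² / 8)`.
-/

open MeasureTheory Real ProbabilityTheory

theorem ConvexOn.le_add_slope_mul_sub {f : ℝ → ℝ} {s : Set ℝ} (hf : ConvexOn ℝ s f)
    {a b v : ℝ} (ha : a ∈ s) (hb : b ∈ s) (hav : a ≤ v) (hvb : v ≤ b) :
    f v ≤ f a + slope f a b * (v - a) := by
  rcases hav.eq_or_lt with rfl | hav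
  · simp
  have hv : v ∈ s := hf.1.ordConnected.out ha hb ⟨hav.le, hvb⟩
  have hsec : slope f a v ≤ slope f a b := by
    simpa only [slope_def_field] using
      hf.secant_mono ha hv hb hav.ne' (hav.trans_le hvb).ne' hvb
  calc f v = f a + slope f a v * (v - a) := by
        rw [slope_def_field]; field_simp [sub_ne_zero.2 hav.ne']; ring
    _ ≤ f a + slope f a b * (v - a) := by gcongr

/-- The left-hand side is the moment generating function at `t` of the Bernoulli law on `{a, b}`
with mean zero, so this is Hoeffding's lemma for that law. -/
theorem exp_mul_sub_mul_slope_le {a b : ℝ} (ha : a ≤ 0) (hb : 0 ≤ b) (t : ℝ) :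
    exp (t * a) - a * slope (fun x ↦ exp (t * x)) a b ≤ exp (t ^ 2 * (b - a) ^ 2 / 8) := by
  rcases (ha.trans hb).eq_or_lt with hab | hab
  · obtain rfl : a = 0 := le_antisymm ha (hab ▸ hb)
    simp [← hab]
  have hba : 0 < b - a := sub_pos.2 hab
  let p : unitInterval := ⟨b / (b - a), div_nonneg hb hba.le, (div_le_one hba).2 (by linarith)⟩
  have hIcc : ∀ᵐ x ∂Ber(a, b, p), x ∈ Set.Icc a b := by
    rw [ae_iff]
    exact bernoulliMeasure_apply_of_notMem_of_notMem p measurableSet_Icc.compl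
      (by simp [hab.le]) (by simp [hab.le])
  have hmean : ∫ x, x ∂Ber(a, b, p) = 0 := by
    rw [integral_bernoulliMeasure]
    simp only [p, smul_eq_mul]
    field_simp
    ring
  have hmgf :=
    (hasSubgaussianMGF_of_mem_Icc_of_integral_eq_zero aemeasurable_id hIcc hmean).mgf_le t
  rw [mgf, integral_bernoulliMeasure] at hmgf
  convert hmgf using 1
  · simp only [p, slope_def_field, smul_eq_mul, id]
    field_simp
    ring
  · congr 1
    simp only [NNReal.coe_pow, NNReal.coe_div, coe_nnnorm, norm_eq_abs, abs_of_pos hba,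
      NNReal.coe_ofNat]
    ring

section CondExp

variable {Ω : Type*} {m m0 : MeasurableSpace Ω} {μ : Measure Ω}

theorem ae_nonpos_of_le_of_condExp_eq_zero [IsFiniteMeasure μ] (hm : m ≤ m0) {V Z : Ω → ℝ}
    (hV : Integrable V μ) (hle : ∀ᵐ ω ∂μ, Z ω ≤ V ω) (hcond : μ[V|m] =ᵐ[μ] 0)
    (hZ : Measurable[m] Z) :
    ∀ᵐ ω ∂μ, Z ω ≤ 0 := by
  set S := {ω | 0 < Z ω}
  have hS : MeasurableSet[m] S := measurableSet_lt measurable_const hZ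
  have hV_pos : ∀ᵐ ω ∂μ.restrict S, 0 < V ω := by
    filter_upwards [ae_restrict_of_ae hle, ae_restrict_mem (hm _ hS)] with ω hZV hZ_pos
    exact hZ_pos.trans_le hZV
  have hV_zero : V =ᵐ[μ.restrict S] 0 := by
    refine (integral_eq_zero_iff_of_nonneg_ae (hV_pos.mono fun _ ↦ le_of_lt) hV.restrict).1 ?_
    rw [← setIntegral_condExp hm hV hS, integral_congr_ae (ae_restrict_of_ae hcond)]
    simp
  have hS_null : μ S = 0 := by
    rw [← Measure.restrict_eq_zero, ← ae_eq_bot, ← Filter.eventually_false_iff_eq_bot]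
    filter_upwards [hV_pos, hV_zero] with ω hpos hzero
    simp_all
  filter_upwards [measure_eq_zero_iff_ae_notMem.1 hS_null] with ω hω
  simpa [S] using hω

/-- `A` and `B` need not be integrable, so the argument runs on the `m`-measurable sets where both
are bounded, which exhaust `Ω`. -/
theorem condExp_le_of_le_add_mul [IsFiniteMeasure μ] (hm : m ≤ m0) {f V A B : Ω → ℝ}
    (hf : Integrable f μ) (hV : Integrable V μ) (hcond : μ[V|m] =ᵐ[μ] 0)
    (hA : Measurable[m] A) (hB : Measurable[m] B) (hle : ∀ᵐ ω ∂μ, f ω ≤ A ω + B ω * V ω) :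
    μ[f|m] ≤ᵐ[μ] A := by
  let S : ℕ → Set Ω := fun n ↦ {ω | |A ω| ≤ n} ∩ {ω | |B ω| ≤ n}
  have hS n : MeasurableSet[m] (S n) :=
    (measurableSet_le (measurable_abs.comp hA) measurable_const).inter
      (measurableSet_le (measurable_abs.comp hB) measurable_const)
  have h_norm_le n (g : Ω → ℝ) (hg : ∀ ω ∈ S n, |g ω| ≤ n) :
      ∀ᵐ ω ∂μ, ‖(S n).indicator g ω‖ ≤ n :=
    ae_of_all _ fun ω ↦ by
      rw [norm_indicator_eq_indicator_norm]
      exact Set.indicator_apply_le' (hg ω) fun _ ↦ n.cast_nonneg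
  have hA_trunc n := hA.stronglyMeasurable.indicator (hS n)
  have hB_trunc n := hB.stronglyMeasurable.indicator (hS n)
  have hA_int n : Integrable ((S n).indicator A) μ :=
    .of_bound ((hA_trunc n).mono hm).aestronglyMeasurable n (h_norm_le n A fun _ hω ↦ hω.1)
  have hBV_int n : Integrable ((S n).indicator B * V) μ :=
    hV.bdd_mul ((hB_trunc n).mono hm).aestronglyMeasurable (h_norm_le n B fun _ hω ↦ hω.2)
  have h_trunc n : ∀ᵐ ω ∂μ, ω ∈ S n → (μ[f|m]) ω ≤ A ω := by
    have h_le : (S n).indicator f ≤ᵐ[μ] (S n).indicator A + (S n).indicator B * V := by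
      filter_upwards [hle] with ω hω
      by_cases hωS : ω ∈ S n <;> simp [hωS, hω]
    have h_rhs : μ[(S n).indicator A + (S n).indicator B * V|m] =ᵐ[μ] (S n).indicator A := by
      filter_upwards [condExp_add (hA_int n) (hBV_int n) m,
        condExp_mul_of_stronglyMeasurable_left (hB_trunc n) (hBV_int n) hV, hcond]
        with ω h_add h_mul h_zero
      rw [h_add, Pi.add_apply, h_mul, Pi.mul_apply, h_zero,
        condExp_of_stronglyMeasurable hm (hA_trunc n) (hA_int n)]
      simp
    filter_upwards [condExp_indicator hf (hS n), h_rhs,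
      condExp_mono (m := m) (hf.indicator (hm _ (hS n))) ((hA_int n).add (hBV_int n)) h_le]
      with ω h_ind h_rhs h_mono hωS
    simpa [h_ind, h_rhs, hωS] using h_mono
  filter_upwards [ae_all_iff.2 h_trunc] with ω hω
  obtain ⟨n, hn⟩ := exists_nat_ge (max |A ω| |B ω|)
  exact hω n ⟨(le_max_left _ _).trans hn, (le_max_right _ _).trans hn⟩

end CondExp

/-- Conditional Hoeffding lemma: if `Z₁ ≤ V ≤ Z₂` a.s., `E[V|m] = 0` a.s., and `Z₁, Z₂` are
`m`-measurable, then `E[exp(λV)|m] ≤ exp(λ²(Z₂-Z₁)²/8)` a.s. -/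
theorem conditional_hoeffding
    {Ω : Type*} {m0 : MeasurableSpace Ω} (μ : Measure Ω) [IsProbabilityMeasure μ]
    (m : MeasurableSpace Ω) (hm : m ≤ m0)
    (V Z1 Z2 : Ω → ℝ)
    (hV : Integrable V μ)
    (hsandwich : ∀ᵐ ω ∂μ, Z1 ω ≤ V ω ∧ V ω ≤ Z2 ω)
    (hcond : μ[V|m] =ᵐ[μ] 0)
    (hZ1 : Measurable[m] Z1) (hZ2 : Measurable[m] Z2) :
    ∀ lam : ℝ,
      μ[fun ω => Real.exp (lam * V ω)|m]
        ≤ᵐ[μ] fun ω => Real.exp (lam ^ 2 * (Z2 ω - Z1 ω) ^ 2 / 8) := by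
  intro lam
  by_cases hint : Integrable (fun ω ↦ exp (lam * V ω)) μ
  swap
  · rw [condExp_of_not_integrable hint]
    exact ae_of_all _ fun _ ↦ (exp_pos _).le
  have hZ1_nonpos := ae_nonpos_of_le_of_condExp_eq_zero hm hV (hsandwich.mono fun _ h ↦ h.1)
    hcond hZ1
  have hZ2_nonneg : ∀ᵐ ω ∂μ, 0 ≤ Z2 ω := by
    filter_upwards [ae_nonpos_of_le_of_condExp_eq_zero hm hV.neg
      (hsandwich.mono fun _ h ↦ neg_le_neg h.2)
      ((condExp_neg V m).trans (hcond.neg.trans (by simp))) hZ2.neg] with ω h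
    simpa using h
  set f : ℝ → ℝ := fun x ↦ exp (lam * x)
  have hf : ConvexOn ℝ Set.univ f := convexOn_exp.comp_linearMap (LinearMap.lsmul ℝ ℝ lam)
  have hB : Measurable[m] fun ω ↦ slope f (Z1 ω) (Z2 ω) := by
    simp only [slope_def_field, f]
    fun_prop
  have h_chord : ∀ᵐ ω ∂μ,
      f (V ω) ≤ (f (Z1 ω) - Z1 ω * slope f (Z1 ω) (Z2 ω)) + slope f (Z1 ω) (Z2 ω) * V ω := by
    filter_upwards [hsandwich] with ω ⟨h1, h2⟩
    linarith [hf.le_add_slope_mul_sub trivial trivial h1 h2]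
  filter_upwards [condExp_le_of_le_add_mul hm hint hV hcond (by fun_prop) hB h_chord,
    hZ1_nonpos, hZ2_nonneg] with ω h_le h1 h2
  exact h_le.trans (exp_mul_sub_mul_slope_le h1 h2 lam)
end

section
/- Let A be a finite set, n ∈ ℕ, P a probability measure on Aⁿ, and g : Aⁿ → ℝ. Suppose (D^σ_{i,j}) is a random nonnegative upper-triangular matrix (depending measurably on σ) with D^σ_{ii} = 1 such that the martingale increments of g satisfy |Vᵢ(σ)| ≤ (D^σ δg)ᵢ for each i. Define the deterministic matrix 𝒟^{(2)}_{i,j} := (E[(D^σ_{i,j})²])^{1/2}. Then E[(g − E g)²] ≤ ‖𝒟^{(2)}‖²_{ℓ²} ‖δg‖²_{ℓ²}, where ‖𝒟^{(2)}‖_{ℓ²} is the operator norm of 𝒟^{(2)} on ℓ²(ℕ) and δg is the vector of oscillations of g. -/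
open MeasureTheory Real

/-- Oscillation of `g : Aⁿ → ℝ` at coordinate `i`. -/
noncomputable def oscFin {A : Type*} {n : ℕ} (g : (Fin n → A) → ℝ) (i : Fin n) : ℝ :=
  sSup {x | ∃ σ σ' : Fin n → A, (∀ j, j ≠ i → σ j = σ' j) ∧ x = |g σ - g σ'|}

/-- The filtration on `Aⁿ` generated by the first `i` coordinates. -/
def coordFiltration (A : Type*) [MeasurableSpace A] (n : ℕ) (i : ℕ) :
    MeasurableSpace (Fin n → A) :=
  ⨆ (j : Fin n) (_ : (j : ℕ) < i), MeasurableSpace.comap (fun σ => σ j) inferInstance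

/-!
The Doob increments `Vₖ = E[g | ℱₖ] - E[g | ℱₖ₋₁]` are orthogonal in `L²`, so the variance of `g`
is `∑ₖ E[Vₖ²]`. Each increment is dominated by `∑ⱼ D_{k,j} δⱼ`, and expanding the square and
applying Cauchy–Schwarz to every cross term `E[D_{k,j} D_{k,l}]` gives
`E[Vₖ²] ≤ (∑ⱼ 𝒟⁽²⁾_{k,j} δⱼ)²`. Summing over `k` is the squared `ℓ²`-norm of `𝒟⁽²⁾ δ`, which the
operator-norm bound controls.
-/

section L2

variable {Ω : Type*} {m0 : MeasurableSpace Ω} {μ : Measure Ω}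

theorem integral_mul_le_L2_mul_L2 {f h : Ω → ℝ} (hf : MemLp f 2 μ) (hh : MemLp h 2 μ) :
    ∫ ω, f ω * h ω ∂μ ≤ (∫ ω, f ω ^ 2 ∂μ) ^ ((1 : ℝ) / 2) * (∫ ω, h ω ^ 2 ∂μ) ^ ((1 : ℝ) / 2) := by
  have holder := integral_mul_norm_le_Lp_mul_Lq (μ := μ) Real.HolderConjugate.two_two
    (by simpa using hf) (by simpa using hh)
  simp only [norm_eq_abs, rpow_two, sq_abs] at holder
  refine le_trans (integral_mono (hf.integrable_mul hh) ?_ fun ω => ?_) holder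
  · exact (hf.integrable_mul hh).norm.congr (by simp)
  · exact (le_abs_self _).trans (abs_mul _ _).le

theorem integral_sq_sum_mul_le {ι : Type*} (s : Finset ι) {Y : ι → Ω → ℝ} {c : ι → ℝ}
    (hY : ∀ j ∈ s, MemLp (Y j) 2 μ) (hc : ∀ j ∈ s, 0 ≤ c j) :
    ∫ ω, (∑ j ∈ s, Y j ω * c j) ^ 2 ∂μ ≤
      (∑ j ∈ s, (∫ ω, Y j ω ^ 2 ∂μ) ^ ((1 : ℝ) / 2) * c j) ^ 2 := by
  have hint : ∀ j ∈ s, ∀ l ∈ s, Integrable (fun ω => c j * c l * (Y j ω * Y l ω)) μ :=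
    fun j hj l hl => ((hY j hj).integrable_mul (hY l hl)).const_mul _
  calc ∫ ω, (∑ j ∈ s, Y j ω * c j) ^ 2 ∂μ
      = ∑ j ∈ s, ∑ l ∈ s, c j * c l * ∫ ω, Y j ω * Y l ω ∂μ := by
        simp_rw [sq, Finset.sum_mul_sum, ← integral_const_mul]
        rw [integral_finsetSum _ fun j hj => integrable_finsetSum _ fun l hl =>
          (hint j hj l hl).congr (ae_of_all _ fun ω => by ring)]
        refine Finset.sum_congr rfl fun j hj => ?_
        rw [integral_finsetSum _ fun l hl => (hint j hj l hl).congr (ae_of_all _ fun ω => by ring)]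
        exact Finset.sum_congr rfl fun l _ => integral_congr_ae (ae_of_all _ fun ω => by ring)
    _ ≤ ∑ j ∈ s, ∑ l ∈ s, c j * c l *
          ((∫ ω, Y j ω ^ 2 ∂μ) ^ ((1 : ℝ) / 2) * (∫ ω, Y l ω ^ 2 ∂μ) ^ ((1 : ℝ) / 2)) :=
        Finset.sum_le_sum fun j hj => Finset.sum_le_sum fun l hl =>
          mul_le_mul_of_nonneg_left (integral_mul_le_L2_mul_L2 (hY j hj) (hY l hl))
            (mul_nonneg (hc j hj) (hc l hl))
    _ = (∑ j ∈ s, (∫ ω, Y j ω ^ 2 ∂μ) ^ ((1 : ℝ) / 2) * c j) ^ 2 := by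
        rw [sq, Finset.sum_mul_sum]
        exact Finset.sum_congr rfl fun j _ => Finset.sum_congr rfl fun l _ => by ring

theorem integral_sq_le_of_abs_le_sum_mul {ι : Type*} (s : Finset ι) {X : Ω → ℝ}
    {Y : ι → Ω → ℝ} {c : ι → ℝ} (hX : MemLp X 2 μ) (hY : ∀ j ∈ s, MemLp (Y j) 2 μ)
    (hc : ∀ j ∈ s, 0 ≤ c j) (hXY : ∀ᵐ ω ∂μ, |X ω| ≤ ∑ j ∈ s, Y j ω * c j) :
    ∫ ω, X ω ^ 2 ∂μ ≤ (∑ j ∈ s, (∫ ω, Y j ω ^ 2 ∂μ) ^ ((1 : ℝ) / 2) * c j) ^ 2 := by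
  have hsum : MemLp (fun ω => ∑ j ∈ s, Y j ω * c j) 2 μ :=
    memLp_finsetSum s fun j hj => (hY j hj).mul_const (c j)
  refine le_trans (integral_mono_ae hX.integrable_sq hsum.integrable_sq ?_)
    (integral_sq_sum_mul_le s hY hc)
  filter_upwards [hXY] with ω hω
  exact sq_le_sq' (abs_le.mp hω).1 (abs_le.mp hω).2

theorem integral_sq_sum_of_orthogonal {ι : Type*} (s : Finset ι) {X : ι → Ω → ℝ}
    (hint : ∀ k ∈ s, ∀ l ∈ s, Integrable (fun ω => X k ω * X l ω) μ)
    (horth : ∀ k ∈ s, ∀ l ∈ s, k ≠ l → ∫ ω, X k ω * X l ω ∂μ = 0) :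
    ∫ ω, (∑ k ∈ s, X k ω) ^ 2 ∂μ = ∑ k ∈ s, ∫ ω, X k ω ^ 2 ∂μ := by
  simp_rw [sq, Finset.sum_mul_sum]
  rw [integral_finsetSum _ fun k hk => integrable_finsetSum _ (hint k hk)]
  refine Finset.sum_congr rfl fun k hk => ?_
  rw [integral_finsetSum _ (hint k hk), Finset.sum_eq_single_of_mem k hk]
  exact fun l hl hlk => horth k hk l hl hlk.symm

end L2

section Martingale

variable {Ω : Type*} {m0 : MeasurableSpace Ω} {μ : Measure Ω} (ℱ : Filtration ℕ m0) (f : Ω → ℝ)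

theorem condExp_condExp_sub_ae_eq_zero [IsFiniteMeasure μ] (l : ℕ) :
    μ[μ[f|ℱ (l + 1)] - μ[f|ℱ l]|ℱ l] =ᵐ[μ] 0 := by
  have hsub := condExp_sub (m := ℱ l) (μ := μ) (integrable_condExp (f := f) (m := ℱ (l + 1)))
    (integrable_condExp (f := f) (m := ℱ l))
  have htower := condExp_condExp_of_le (μ := μ) (f := f) (ℱ.mono l.le_succ) (ℱ.le (l + 1))
  have hidem : μ[μ[f|ℱ l]|ℱ l] = μ[f|ℱ l] :=
    condExp_of_stronglyMeasurable (ℱ.le l) stronglyMeasurable_condExp integrable_condExp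
  filter_upwards [hsub, htower] with ω hω₁ hω₂
  simp [hω₁, hω₂, hidem]

theorem integral_mul_condExp_sub_eq_zero [IsFiniteMeasure μ] {l : ℕ} {h : Ω → ℝ}
    (hh : StronglyMeasurable[ℱ l] h) (hint : Integrable (h * (μ[f|ℱ (l + 1)] - μ[f|ℱ l])) μ) :
    ∫ ω, h ω * (μ[f|ℱ (l + 1)] - μ[f|ℱ l]) ω ∂μ = 0 := by
  calc ∫ ω, h ω * (μ[f|ℱ (l + 1)] - μ[f|ℱ l]) ω ∂μ
      = ∫ ω, μ[h * (μ[f|ℱ (l + 1)] - μ[f|ℱ l])|ℱ l] ω ∂μ := (integral_condExp (ℱ.le l)).symm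
    _ = ∫ ω, h ω * μ[μ[f|ℱ (l + 1)] - μ[f|ℱ l]|ℱ l] ω ∂μ :=
        integral_congr_ae (condExp_mul_of_stronglyMeasurable_left hh hint
          (integrable_condExp.sub integrable_condExp))
    _ = 0 := by
        rw [integral_congr_ae ((condExp_condExp_sub_ae_eq_zero ℱ f l).mono fun ω hω => by
          simp [hω] : (fun ω => h ω * μ[μ[f|ℱ (l + 1)] - μ[f|ℱ l]|ℱ l] ω) =ᵐ[μ] 0)]
        simp

theorem integral_sq_condExp_sub_eq_sum [IsFiniteMeasure μ] (hf : MemLp f 2 μ) (n : ℕ) :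
    ∫ ω, (μ[f|ℱ n] ω - μ[f|ℱ 0] ω) ^ 2 ∂μ =
      ∑ k ∈ Finset.range n, ∫ ω, (μ[f|ℱ (k + 1)] - μ[f|ℱ k]) ω ^ 2 ∂μ := by
  have hL2 : ∀ k, MemLp (μ[f|ℱ (k + 1)] - μ[f|ℱ k]) 2 μ :=
    fun k => (hf.condExp one_le_two).sub (hf.condExp one_le_two)
  have horth : ∀ {k l : ℕ}, k < l →
      ∫ ω, (μ[f|ℱ (k + 1)] - μ[f|ℱ k]) ω * (μ[f|ℱ (l + 1)] - μ[f|ℱ l]) ω ∂μ = 0 := fun hkl =>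
    integral_mul_condExp_sub_eq_zero ℱ f
      ((stronglyMeasurable_condExp.mono (ℱ.mono hkl)).sub
        (stronglyMeasurable_condExp.mono (ℱ.mono hkl.le)))
      ((hL2 _).integrable_mul (hL2 _))
  have htelescope : ∀ ω, μ[f|ℱ n] ω - μ[f|ℱ 0] ω =
      ∑ k ∈ Finset.range n, (μ[f|ℱ (k + 1)] - μ[f|ℱ k]) ω := fun ω => by
    simp only [Pi.sub_apply, Finset.sum_range_sub (fun k => μ[f|ℱ k] ω)]
  simp_rw [htelescope]
  refine integral_sq_sum_of_orthogonal _ (fun k _ l _ => (hL2 k).integrable_mul (hL2 l))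
    fun k _ l _ hkl => ?_
  rcases hkl.lt_or_gt with hlt | hlt
  · exact horth hlt
  · simp_rw [mul_comm ((μ[f|ℱ (k + 1)] - μ[f|ℱ k]) _)]
    exact horth hlt

theorem integral_sq_sub_integral_eq_sum [IsProbabilityMeasure μ] (hf : MemLp f 2 μ) {n : ℕ}
    (hℱ0 : ℱ 0 = ⊥) (hfn : StronglyMeasurable[ℱ n] f) :
    ∫ ω, (f ω - ∫ x, f x ∂μ) ^ 2 ∂μ =
      ∑ k ∈ Finset.range n, ∫ ω, (μ[f|ℱ (k + 1)] - μ[f|ℱ k]) ω ^ 2 ∂μ := by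
  have htop : μ[f|ℱ n] = f := condExp_of_stronglyMeasurable (ℱ.le n) hfn (hf.integrable one_le_two)
  have hbot : μ[f|ℱ 0] = fun _ => ∫ x, f x ∂μ := hℱ0 ▸ condExp_bot f
  rw [← integral_sq_condExp_sub_eq_sum ℱ f hf n, htop, hbot]

end Martingale

theorem sum_sq_rows_le_tsum_of_upperTriangular {M : ℕ → ℕ → ℝ} {u : ℕ → ℝ} {n : ℕ}
    (hM : ∀ i j, j < i → M i j = 0) (hu : ∀ j, n ≤ j → u j = 0) :
    ∑ k ∈ Finset.range n, (∑' j, M (k + 1) j * u j) ^ 2 ≤ ∑' i, (∑' j, M i j * u j) ^ 2 := by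
  have hrow : ∀ i, ∑' j, M i j * u j = ∑ j ∈ Finset.range n, M i j * u j := fun i =>
    tsum_eq_sum fun j hj => by rw [hu j (by simpa using hj), mul_zero]
  have hsummable : Summable fun i => (∑' j, M i j * u j) ^ 2 := by
    refine summable_of_ne_finset_zero (s := Finset.range n) fun i hi => ?_
    rw [hrow, Finset.sum_eq_zero fun j hj => ?_, sq, zero_mul]
    rw [hM i j ((Finset.mem_range.mp hj).trans_le (by simpa using hi)), zero_mul]
  calc ∑ k ∈ Finset.range n, (∑' j, M (k + 1) j * u j) ^ 2
      ≤ ∑ i ∈ Finset.range (n + 1), (∑' j, M i j * u j) ^ 2 := by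
        rw [Finset.sum_range_succ']
        exact le_add_of_nonneg_right (sq_nonneg _)
    _ ≤ ∑' i, (∑' j, M i j * u j) ^ 2 := hsummable.sum_le_tsum _ fun _ _ => sq_nonneg _

section Oscillation

variable {A : Type*} {n : ℕ} (g : (Fin n → A) → ℝ)

noncomputable def oscVec (j : ℕ) : ℝ := if h : j < n then oscFin g ⟨j, h⟩ else 0

theorem oscFin_nonneg (i : Fin n) : 0 ≤ oscFin g i :=
  Real.sSup_nonneg <| by rintro _ ⟨σ, σ', -, rfl⟩; exact abs_nonneg _

theorem oscVec_nonneg (j : ℕ) : 0 ≤ oscVec g j := by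
  unfold oscVec; split_ifs
  exacts [oscFin_nonneg g _, le_rfl]

theorem oscVec_of_le {j : ℕ} (hj : n ≤ j) : oscVec g j = 0 := by
  simp [oscVec, hj.not_gt]

theorem tsum_mul_oscVec (a : ℕ → ℝ) :
    ∑' j, a j * oscVec g j = ∑ j ∈ Finset.range n, a j * oscVec g j :=
  tsum_eq_sum fun j hj => by rw [oscVec_of_le g (by simpa using hj), mul_zero]

theorem summable_oscVec_sq : Summable fun j => oscVec g j ^ 2 :=
  summable_of_ne_finset_zero (s := Finset.range n) fun j hj => by
    rw [oscVec_of_le g (by simpa using hj), sq, zero_mul]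

end Oscillation

section Coordinates

variable (A : Type*) [MeasurableSpace A] (n : ℕ)

theorem coordFiltration_mono : Monotone (coordFiltration A n) := fun _ _ hkl =>
  iSup₂_mono' fun j hj => ⟨j, hj.trans_le hkl, le_rfl⟩

theorem coordFiltration_le_pi (i : ℕ) : coordFiltration A n i ≤ MeasurableSpace.pi :=
  iSup₂_le fun j _ => le_iSup (fun j => MeasurableSpace.comap (fun σ : Fin n → A => σ j) _) j

theorem coordFiltration_zero : coordFiltration A n 0 = ⊥ := by
  simp [coordFiltration]

theorem coordFiltration_self : coordFiltration A n n = MeasurableSpace.pi := by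
  simp [coordFiltration, MeasurableSpace.pi]

def coordFiltration.filtration : Filtration ℕ (MeasurableSpace.pi : MeasurableSpace (Fin n → A)) :=
  ⟨coordFiltration A n, coordFiltration_mono A n, coordFiltration_le_pi A n⟩

theorem coordFiltration.filtration_apply (i : ℕ) :
    coordFiltration.filtration A n i = coordFiltration A n i :=
  rfl

end Coordinates

theorem variance_bound_coupling_general
    {A : Type*} [Fintype A] [MeasurableSpace A] [MeasurableSingletonClass A]
    (n : ℕ) (μ : Measure (Fin n → A)) [IsProbabilityMeasure μ]
    (g : (Fin n → A) → ℝ) (hg : Measurable g)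
    (δ : ℕ → ℝ) (hδ : δ = fun j => if h : j < n then oscFin g ⟨j, h⟩ else 0)
    (V : ℕ → (Fin n → A) → ℝ)
    (hV : ∀ i, V i = μ[g|coordFiltration A n i] - μ[g|coordFiltration A n (i - 1)])
    (D : (Fin n → A) → ℕ → ℕ → ℝ)
    (hDtri : ∀ σ i j, j < i → D σ i j = 0)
    (hVD : ∀ i ∈ Finset.Icc 1 n, ∀ᵐ σ ∂μ, |V i σ| ≤ ∑' j, D σ i j * δ j)
    (calD2 : ℕ → ℕ → ℝ)
    (hcalD2 : calD2 = fun i j => (∫ σ, D σ i j ^ 2 ∂μ) ^ ((1 : ℝ) / 2))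
    (Dnorm : ℝ)
    (hop : ∀ u : ℕ → ℝ, (∀ j, 0 ≤ u j) → Summable (fun j => u j ^ 2) →
      ∑' i, (∑' j, calD2 i j * u j) ^ 2 ≤ Dnorm ^ 2 * ∑' j, u j ^ 2) :
    ∫ σ, (g σ - ∫ x, g x ∂μ) ^ 2 ∂μ ≤ Dnorm ^ 2 * ∑' j, δ j ^ 2 := by
  obtain rfl : δ = oscVec g := hδ
  have hincrement : ∀ k ∈ Finset.range n,
      ∫ σ, V (k + 1) σ ^ 2 ∂μ ≤ (∑' j, calD2 (k + 1) j * oscVec g j) ^ 2 := fun k hk => by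
    rw [tsum_mul_oscVec, hcalD2]
    refine integral_sq_le_of_abs_le_sum_mul _ .of_discrete (fun _ _ => .of_discrete)
      (fun j _ => oscVec_nonneg g j) ?_
    simpa only [tsum_mul_oscVec] using hVD (k + 1) (by simpa using Finset.mem_range.mp hk)
  calc ∫ σ, (g σ - ∫ x, g x ∂μ) ^ 2 ∂μ
      = ∑ k ∈ Finset.range n, ∫ σ, V (k + 1) σ ^ 2 ∂μ := by
        simp only [hV, Nat.add_sub_cancel]
        exact integral_sq_sub_integral_eq_sum (coordFiltration.filtration A n) g .of_discrete
          (coordFiltration_zero A n)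
          (by rw [coordFiltration.filtration_apply, coordFiltration_self]
              exact hg.stronglyMeasurable)
    _ ≤ ∑ k ∈ Finset.range n, (∑' j, calD2 (k + 1) j * oscVec g j) ^ 2 :=
        Finset.sum_le_sum hincrement
    _ ≤ ∑' i, (∑' j, calD2 i j * oscVec g j) ^ 2 :=
        sum_sq_rows_le_tsum_of_upperTriangular (fun i j hji => by simp [hcalD2, hDtri _ i j hji])
          fun j => oscVec_of_le g
    _ ≤ Dnorm ^ 2 * ∑' j, oscVec g j ^ 2 :=
        hop _ (oscVec_nonneg g) (summable_oscVec_sq g)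

/-- Variance bound via the second-moment coupling matrix: if the martingale increments of `g`
satisfy `|Vᵢ(σ)| ≤ (D^σ δg)ᵢ` for a random nonnegative upper-triangular matrix `D^σ` with unit
diagonal, and `𝒟⁽²⁾_{i,j} = (E[(D^σ_{i,j})²])^{1/2}` has `ℓ²`-operator norm at most `Dnorm`,
then `E[(g - E g)²] ≤ Dnorm² ‖δg‖²`. -/
theorem variance_bound_coupling
    {A : Type*} [Fintype A] [Nonempty A] [MeasurableSpace A] [MeasurableSingletonClass A]
    (n : ℕ) (μ : Measure (Fin n → A)) [IsProbabilityMeasure μ]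
    (g : (Fin n → A) → ℝ) (hg : Measurable g)
    (δ : ℕ → ℝ) (hδ : δ = fun j => if h : j < n then oscFin g ⟨j, h⟩ else 0)
    (V : ℕ → (Fin n → A) → ℝ)
    (hV : ∀ i, V i = μ[g|coordFiltration A n i] - μ[g|coordFiltration A n (i - 1)])
    (D : (Fin n → A) → ℕ → ℕ → ℝ)
    (hDnn : ∀ σ i j, 0 ≤ D σ i j)
    (hDdiag : ∀ σ i, D σ i i = 1)
    (hDtri : ∀ σ i j, j < i → D σ i j = 0)
    (hDmeas : ∀ i j, Measurable fun σ => D σ i j)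
    (hVD : ∀ i ∈ Finset.Icc 1 n, ∀ᵐ σ ∂μ, |V i σ| ≤ ∑' j, D σ i j * δ j)
    (calD2 : ℕ → ℕ → ℝ)
    (hcalD2 : calD2 = fun i j => (∫ σ, D σ i j ^ 2 ∂μ) ^ ((1 : ℝ) / 2))
    (Dnorm : ℝ) (hDnorm0 : 0 ≤ Dnorm)
    (hop : ∀ u : ℕ → ℝ, (∀ j, 0 ≤ u j) → Summable (fun j => u j ^ 2) →
      ∑' i, (∑' j, calD2 i j * u j) ^ 2 ≤ Dnorm ^ 2 * ∑' j, u j ^ 2) :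
    ∫ σ, (g σ - ∫ x, g x ∂μ) ^ 2 ∂μ ≤ Dnorm ^ 2 * ∑' j, δ j ^ 2 :=
  variance_bound_coupling_general n μ g hg δ hδ V hV D hDtri hVD calD2 hcalD2 Dnorm hop
end

section
/- Let ℓ₀ be a nonnegative random variable and p ∈ ℕ, ε > 0, ε' := ε/(2p−1). Then Σ_{j=1}^∞ P(ℓ₀ ≥ j)^{1/(2p)} ≤ ζ(1+ε')^{(2p−1)/(2p)} · (E[ℓ₀^{2p+ε}])^{1/(2p)}, where ζ is the Riemann zeta function. -/
/-!
With `c = 2p`, `q = c/(c-1)` and `s = 1 + ε'`, split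
`P(ℓ ≥ j)^{1/c} = j^{-s/q} · (j^{s/q} P(ℓ ≥ j)^{1/c})` and apply Hölder with exponents `q, c`.
The first factor gives `ζ(s)^{1/q}`; the second gives `(∑ j^{s(c-1)} P(ℓ ≥ j))^{1/c}`, and since
`∑_{1 ≤ j ≤ L} j^r ≤ L^{r+1}` pointwise, `∑ j^{s(c-1)} P(ℓ ≥ j) ≤ E[ℓ^{s(c-1)+1}] = E[ℓ^{2p+ε}]`.
Everything is done in `ℝ≥0∞`, so summability only enters when converting back to `ℝ`.
-/

open MeasureTheory
open scoped ENNReal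

theorem ENNReal.inner_le_Lp_mul_Lq_tsum {ι : Type*} (f g : ι → ℝ≥0∞) {p q : ℝ}
    (hpq : p.HolderConjugate q) :
    ∑' i, f i * g i ≤ (∑' i, f i ^ p) ^ (1 / p) * (∑' i, g i ^ q) ^ (1 / q) := by
  rw [ENNReal.tsum_eq_iSup_sum]
  refine iSup_le fun s => (ENNReal.inner_le_Lp_mul_Lq s f g hpq).trans ?_
  have hp : 0 ≤ 1 / p := one_div_nonneg.2 hpq.nonneg
  have hq : 0 ≤ 1 / q := one_div_nonneg.2 hpq.symm.nonneg
  gcongr <;> exact ENNReal.sum_le_tsum s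

theorem ENNReal.tsum_natCast_add_one_rpow_neg {s : ℝ} (hs : 1 < s) :
    ∑' m : ℕ, ((m : ℝ≥0∞) + 1) ^ (-s) = ENNReal.ofReal (∑' m : ℕ, ((m : ℝ) + 1) ^ (-s)) := by
  have hsum : Summable fun m : ℕ => ((m : ℝ) + 1) ^ (-s) := by
    refine ((Real.summable_one_div_nat_add_rpow 1 s).2 hs).congr fun m => ?_
    rw [abs_of_pos (by positivity), one_div, Real.rpow_neg (by positivity)]
  rw [ENNReal.ofReal_tsum_of_nonneg (fun m => by positivity) hsum]
  refine tsum_congr fun m => ?_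
  rw [← ENNReal.ofReal_rpow_of_pos (by positivity), ENNReal.ofReal_add (by positivity) zero_le_one,
    ENNReal.ofReal_natCast, ENNReal.ofReal_one]

theorem tsum_ite_natCast_add_one_le_rpow_le {r : ℝ} (hr : 0 ≤ r) (L : ℝ) :
    ∑' j : ℕ, (if (j : ℝ) + 1 ≤ L then ((j : ℝ≥0∞) + 1) ^ r else 0)
      ≤ ENNReal.ofReal L ^ (r + 1) := by
  have hvanish : ∀ j ∉ Finset.range ⌊L⌋₊,
      (if (j : ℝ) + 1 ≤ L then ((j : ℝ≥0∞) + 1) ^ r else 0) = 0 := by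
    intro j hj
    rw [Finset.mem_range, not_lt] at hj
    refine if_neg (not_le.2 ((Nat.lt_floor_add_one L).trans_le ?_))
    exact_mod_cast Nat.add_le_add_right hj 1
  have hterm : ∀ j ∈ Finset.range ⌊L⌋₊,
      (if (j : ℝ) + 1 ≤ L then ((j : ℝ≥0∞) + 1) ^ r else 0) ≤ ENNReal.ofReal L ^ r := by
    intro j _
    split_ifs with hj
    · gcongr
      rw [← ENNReal.ofReal_natCast, ← ENNReal.ofReal_one,
        ← ENNReal.ofReal_add (by positivity) zero_le_one]
      exact ENNReal.ofReal_le_ofReal hj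
    · exact zero_le
  calc _ = ∑ j ∈ Finset.range ⌊L⌋₊, (if (j : ℝ) + 1 ≤ L then ((j : ℝ≥0∞) + 1) ^ r else 0) :=
        tsum_eq_sum hvanish
    _ ≤ ⌊L⌋₊ * ENNReal.ofReal L ^ r := by
        simpa [nsmul_eq_mul] using Finset.sum_le_card_nsmul _ _ _ hterm
    _ ≤ ENNReal.ofReal L * ENNReal.ofReal L ^ r := by
        gcongr
        rcases le_or_gt 0 L with hL | hL
        · rw [← ENNReal.ofReal_natCast]
          exact ENNReal.ofReal_le_ofReal (Nat.floor_le hL)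
        · simp [Nat.floor_of_nonpos hL.le]
    _ = ENNReal.ofReal L ^ (r + 1) := by
        rw [add_comm, ENNReal.rpow_add_of_nonneg _ _ zero_le_one hr, ENNReal.rpow_one]

theorem tsum_natCast_add_one_rpow_mul_measure_le_lintegral {Ω : Type*} [MeasurableSpace Ω]
    (μ : Measure Ω) {ℓ : Ω → ℝ} (hℓ : Measurable ℓ) {r : ℝ} (hr : 0 ≤ r) :
    ∑' j : ℕ, ((j : ℝ≥0∞) + 1) ^ r * μ {σ | (j : ℝ) + 1 ≤ ℓ σ}
      ≤ ∫⁻ σ, ENNReal.ofReal (ℓ σ) ^ (r + 1) ∂μ := by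
  have hms (j : ℕ) : MeasurableSet {σ | (j : ℝ) + 1 ≤ ℓ σ} := hℓ measurableSet_Ici
  calc _ = ∑' j : ℕ, ∫⁻ σ, {σ | (j : ℝ) + 1 ≤ ℓ σ}.indicator (fun _ => ((j : ℝ≥0∞) + 1) ^ r) σ ∂μ :=
        tsum_congr fun j => (lintegral_indicator_const (hms j) _).symm
    _ = ∫⁻ σ, ∑' j : ℕ, (if (j : ℝ) + 1 ≤ ℓ σ then ((j : ℝ≥0∞) + 1) ^ r else 0) ∂μ := by
        rw [← lintegral_tsum fun j => (measurable_const.indicator (hms j)).aemeasurable]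
        rfl
    _ ≤ _ := lintegral_mono fun σ => tsum_ite_natCast_add_one_le_rpow_le hr (ℓ σ)

theorem tsum_measure_tail_rpow_le {Ω : Type*} [MeasurableSpace Ω] (μ : Measure Ω)
    {ℓ : Ω → ℝ} (hℓ : Measurable ℓ) {c s : ℝ} (hc : 1 < c) (hs : 0 ≤ s) :
    ∑' j : ℕ, μ {σ | (j : ℝ) + 1 ≤ ℓ σ} ^ (1 / c)
      ≤ (∑' j : ℕ, ((j : ℝ≥0∞) + 1) ^ (-s)) ^ ((c - 1) / c)
        * (∫⁻ σ, ENNReal.ofReal (ℓ σ) ^ (s * (c - 1) + 1) ∂μ) ^ (1 / c) := by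
  set q := c / (c - 1)
  have hqc : q.HolderConjugate c := (Real.HolderConjugate.conjExponent hc).symm
  set w : ℕ → ℝ≥0∞ := fun j => (j : ℝ≥0∞) + 1
  set P : ℕ → ℝ≥0∞ := fun j => μ {σ | (j : ℝ) + 1 ≤ ℓ σ}
  have hw0 (j : ℕ) : w j ≠ 0 := by simp [w]
  have hwtop (j : ℕ) : w j ≠ ⊤ := by simp [w]
  have hsplit (j : ℕ) : P j ^ (1 / c) = w j ^ (-s / q) * (w j ^ (s / q) * P j ^ (1 / c)) := by
    rw [← mul_assoc, ← ENNReal.rpow_add _ _ (hw0 j) (hwtop j), neg_div, neg_add_cancel,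
      ENNReal.rpow_zero, one_mul]
  have hfirst (j : ℕ) : (w j ^ (-s / q)) ^ q = w j ^ (-s) := by
    rw [← ENNReal.rpow_mul, div_mul_cancel₀ _ hqc.ne_zero]
  have hsecond (j : ℕ) : (w j ^ (s / q) * P j ^ (1 / c)) ^ c = w j ^ (s * (c - 1)) * P j := by
    rw [ENNReal.mul_rpow_of_nonneg _ _ hqc.symm.nonneg, ← ENNReal.rpow_mul, ← ENNReal.rpow_mul,
      one_div_mul_cancel hqc.symm.ne_zero, ENNReal.rpow_one]
    congr 2
    have : c - 1 ≠ 0 := by linarith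
    simp only [q]
    field_simp
  calc ∑' j, P j ^ (1 / c) = ∑' j, w j ^ (-s / q) * (w j ^ (s / q) * P j ^ (1 / c)) :=
        tsum_congr hsplit
    _ ≤ (∑' j, (w j ^ (-s / q)) ^ q) ^ (1 / q)
          * (∑' j, (w j ^ (s / q) * P j ^ (1 / c)) ^ c) ^ (1 / c) :=
        ENNReal.inner_le_Lp_mul_Lq_tsum _ _ hqc
    _ ≤ _ := by
        simp only [hfirst, hsecond]
        rw [show 1 / q = (c - 1) / c from one_div_div _ _]
        gcongr
        exact tsum_natCast_add_one_rpow_mul_measure_le_lintegral μ hℓ (by nlinarith)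

theorem tail_sum_moment_bound_general
    {Ω : Type*} {m0 : MeasurableSpace Ω} (μ : Measure Ω)
    (ℓ : Ω → ℝ) (hℓnn : ∀ σ, 0 ≤ ℓ σ) (hℓmeas : Measurable ℓ)
    (p : ℕ) (hp : 1 ≤ p) (ε : ℝ) (hε : 0 < ε)
    (ε' : ℝ) (hε' : ε' = ε / (2 * p - 1))
    (hmom : Integrable (fun σ => ℓ σ ^ ((2 * p : ℝ) + ε)) μ) :
    ∑' j : ℕ, (μ {σ | ((j : ℝ) + 1) ≤ ℓ σ}).toReal ^ ((1 : ℝ) / (2 * p))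
      ≤ (∑' m : ℕ, ((m : ℝ) + 1) ^ (-(1 + ε'))) ^ ((2 * p - 1 : ℝ) / (2 * p))
        * (∫ σ, ℓ σ ^ ((2 * p : ℝ) + ε) ∂μ) ^ ((1 : ℝ) / (2 * p)) := by
  set c : ℝ := 2 * p
  have hc : 1 < c := by
    have : (1 : ℝ) ≤ p := by exact_mod_cast hp
    linarith
  have hε'pos : 0 < ε' := hε' ▸ div_pos hε (by linarith)
  have hexp : (1 + ε') * (c - 1) + 1 = c + ε := by
    have : c - 1 ≠ 0 := by linarith
    rw [hε']
    field_simp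
    ring
  have hmoment : ∫⁻ σ, ENNReal.ofReal (ℓ σ) ^ (c + ε) ∂μ
      = ENNReal.ofReal (∫ σ, ℓ σ ^ (c + ε) ∂μ) := by
    rw [ofReal_integral_eq_lintegral_ofReal hmom
      (Filter.Eventually.of_forall fun σ => Real.rpow_nonneg (hℓnn σ) _)]
    exact lintegral_congr fun σ => ENNReal.ofReal_rpow_of_nonneg (hℓnn σ) (by linarith)
  have hzeta_nonneg : 0 ≤ ∑' m : ℕ, ((m : ℝ) + 1) ^ (-(1 + ε')) :=
    tsum_nonneg fun m => by positivity
  have hmoment_nonneg : 0 ≤ ∫ σ, ℓ σ ^ (c + ε) ∂μ :=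
    integral_nonneg fun σ => Real.rpow_nonneg (hℓnn σ) _
  have key := tsum_measure_tail_rpow_le μ hℓmeas hc (s := 1 + ε') (by linarith)
  rw [hexp, hmoment, ENNReal.tsum_natCast_add_one_rpow_neg (by linarith),
    ENNReal.ofReal_rpow_of_nonneg hzeta_nonneg (by positivity),
    ENNReal.ofReal_rpow_of_nonneg hmoment_nonneg (by positivity),
    ← ENNReal.ofReal_mul (by positivity)] at key
  have hfinite := ENNReal.ne_top_of_tsum_ne_top (ne_top_of_le_ne_top ENNReal.ofReal_ne_top key)
  calc _ = (∑' j : ℕ, μ {σ | (j : ℝ) + 1 ≤ ℓ σ} ^ (1 / c)).toReal := by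
        simp only [ENNReal.tsum_toReal_eq hfinite, ENNReal.toReal_rpow]
    _ ≤ _ := ENNReal.toReal_le_of_le_ofReal (by positivity) key

/-- Tail-sum moment bound: for a nonnegative random variable `ℓ₀`, `p ≥ 1` and `ε > 0`,
with `ε' = ε/(2p-1)`,
`∑_{j≥1} P(ℓ₀ ≥ j)^{1/(2p)} ≤ ζ(1+ε')^{(2p-1)/(2p)} (E[ℓ₀^{2p+ε}])^{1/(2p)}`,
where `ζ(s) = ∑_{n≥1} n^{-s}`. -/
theorem tail_sum_moment_bound
    {Ω : Type*} {m0 : MeasurableSpace Ω} (μ : Measure Ω) [IsProbabilityMeasure μ]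
    (ℓ : Ω → ℝ) (hℓnn : ∀ σ, 0 ≤ ℓ σ) (hℓmeas : Measurable ℓ)
    (p : ℕ) (hp : 1 ≤ p) (ε : ℝ) (hε : 0 < ε)
    (ε' : ℝ) (hε' : ε' = ε / (2 * p - 1))
    (hmom : Integrable (fun σ => ℓ σ ^ ((2 * p : ℝ) + ε)) μ) :
    ∑' j : ℕ, (μ {σ | ((j : ℝ) + 1) ≤ ℓ σ}).toReal ^ ((1 : ℝ) / (2 * p))
      ≤ (∑' m : ℕ, ((m : ℝ) + 1) ^ (-(1 + ε'))) ^ ((2 * p - 1 : ℝ) / (2 * p))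
        * (∫ σ, ℓ σ ^ ((2 * p : ℝ) + ε) ∂μ) ^ ((1 : ℝ) / (2 * p)) :=
  tail_sum_moment_bound_general (m0 := m0) μ ℓ hℓnn hℓmeas p hp ε hε ε' hε' hmom
end
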